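/- arXiv:1905.05620 — 2 statements merged into one kernel-verified Lean document; each statement's English description precedes it below -/
import Mathlib

section
/- Assume k is a nontrivial commutative ring and a + b ≤ n. Then the family of linear maps (T_P), indexed by the partition diagrams P of type (a,b), is linearly independent over k in Hom_k(V^{⊗a}, V^{⊗b}). -/
open scoped Classical

/-- A partition diagram of type `(a,b)`: a set partition of `Fin a ⊕ Fin b`
into nonempty blocks. -/
abbrev PartitionDiagram (a b : ℕ) :=
  Finpartition (Finset.univ : Finset (Fin a ⊕ Fin b))

/-- `Sum.elim f g` is constant on every block of `P`. -/
def Compatible {n a b : ℕ} (P : PartitionDiagram a b)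
    (f : Fin a → Fin n) (g : Fin b → Fin n) : Prop :=
  ∀ B ∈ P.parts, ∀ x ∈ B, ∀ y ∈ B, Sum.elim f g x = Sum.elim f g y

/-- The linear map `T_P : V^{⊗a} → V^{⊗b}` associated to a partition diagram `P`,
where `V^{⊗a}` is modelled as the free module on `Fin a → Fin n`, with basis vector
at `f` corresponding to `e_{f(1)} ⊗ ⋯ ⊗ e_{f(a)}`. -/
noncomputable def TP (k : Type*) [CommRing k] (n : ℕ) {a b : ℕ}
    (P : PartitionDiagram a b) :
    ((Fin a → Fin n) → k) →ₗ[k] ((Fin b → Fin n) → k) where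
  toFun x g := ∑ f : Fin a → Fin n, if Compatible P f g then x f else 0
  map_add' x y := by
    funext g
    simp only [Pi.add_apply]
    rw [← Finset.sum_add_distrib]
    exact Finset.sum_congr rfl fun f _ => by split <;> simp
  map_smul' c x := by
    funext g
    simp only [Pi.smul_apply, smul_eq_mul, RingHom.id_apply]
    rw [Finset.mul_sum]
    exact Finset.sum_congr rfl fun f _ => by split <;> simp

/-- The (diagonal) action of `σ ∈ S_n` on `V^{⊗a}`: on basis vectors it sends
`e_{f(1)} ⊗ ⋯ ⊗ e_{f(a)}` to `e_{σ(f(1))} ⊗ ⋯ ⊗ e_{σ(f(a))}`. -/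
def permMap (k : Type*) [CommRing k] {n a : ℕ} (σ : Equiv.Perm (Fin n)) :
    ((Fin a → Fin n) → k) →ₗ[k] ((Fin a → Fin n) → k) where
  toFun x f := x fun i => σ⁻¹ (f i)
  map_add' _ _ := rfl
  map_smul' _ _ := rfl

/-!
Order partition diagrams by refinement. Since `a + b ≤ n`, the blocks of a diagram `P` can be
labelled by distinct elements of `Fin n`; reading the labels off the points gives a basis
tensor `f` and a coordinate `g` with `T_Q(e_f)(g) = 1` if `Q` refines `P` and `0` otherwise.
These functionals make the family `(T_Q)` unitriangular with respect to a well-founded order,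
hence linearly independent.
-/

theorem linearIndependent_of_unitriangular {ι R M : Type*} [Ring R] [AddCommGroup M]
    [Module R M] [PartialOrder ι] [WellFoundedLT ι] (v : ι → M) (φ : ι → M →ₗ[R] R)
    (h_le : ∀ i j, φ i (v j) ≠ 0 → j ≤ i) (h_diag : ∀ i, IsUnit (φ i (v i))) :
    LinearIndependent R v := by
  rw [linearIndependent_iff']
  intro s c hc i
  induction i using WellFoundedLT.induction with
  | _ i ih =>
    intro hi
    have hφ : ∑ j ∈ s, c j * φ i (v j) = 0 := by
      simpa using congrArg (φ i) hc
    rw [Finset.sum_eq_single_of_mem i hi] at hφ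
    · exact (h_diag i).mul_left_eq_zero.1 hφ
    · intro j hj hji
      by_cases hφj : φ i (v j) = 0
      · rw [hφj, mul_zero]
      · rw [ih j (lt_of_le_of_ne (h_le i j hφj) hji) hj, zero_mul]

namespace Finpartition

variable {α : Type*} [DecidableEq α] {s : Finset α}

theorem le_iff_forall_part_eq {P Q : Finpartition s} :
    Q ≤ P ↔ ∀ B ∈ Q.parts, ∀ x ∈ B, ∀ y ∈ B, P.part x = P.part y := by
  constructor
  · intro hle B hB x hx y hy
    obtain ⟨C, hC, hBC⟩ := hle hB
    exact (P.part_eq_of_mem hC (hBC hx)).trans (P.part_eq_of_mem hC (hBC hy)).symm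
  · intro h B hB
    obtain ⟨x, hx⟩ := Q.nonempty_of_mem_parts hB
    have hxs : x ∈ s := Q.subset hB hx
    refine ⟨P.part x, P.part_mem.2 hxs, fun y hy => ?_⟩
    rw [h B hB x hx y hy]
    exact P.mem_part_self.2 (Q.subset hB hy)

theorem exists_label_eq_iff_part_eq [Fintype α] {β : Type*} [Fintype β]
    (P : Finpartition (Finset.univ : Finset α)) (hcard : P.parts.card ≤ Fintype.card β) :
    ∃ label : α → β, ∀ x y, label x = label y ↔ P.part x = P.part y := by
  obtain ⟨ι⟩ := Function.Embedding.nonempty_of_card_le (α := P.parts) (β := β) (by simpa)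
  refine ⟨fun x => ι ⟨P.part x, P.part_mem.2 (Finset.mem_univ x)⟩, fun x y => ?_⟩
  rw [ι.injective.eq_iff, Subtype.mk.injEq]

end Finpartition

theorem compatible_iff_le_of_label {n a b : ℕ} (P Q : PartitionDiagram a b)
    (label : Fin a ⊕ Fin b → Fin n) (hlabel : ∀ x y, label x = label y ↔ P.part x = P.part y) :
    Compatible Q (label ∘ Sum.inl) (label ∘ Sum.inr) ↔ Q ≤ P := by
  simp only [Compatible, Sum.elim_comp_inl_inr, hlabel, Finpartition.le_iff_forall_part_eq]

theorem exists_compatible_iff_le {n a b : ℕ} (hab : a + b ≤ n) (P : PartitionDiagram a b) :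
    ∃ (f : Fin a → Fin n) (g : Fin b → Fin n),
      ∀ Q : PartitionDiagram a b, Compatible Q f g ↔ Q ≤ P := by
  have hcard : P.parts.card ≤ Fintype.card (Fin n) :=
    calc P.parts.card ≤ (Finset.univ : Finset (Fin a ⊕ Fin b)).card := P.card_parts_le_card
      _ = a + b := by simp
      _ ≤ Fintype.card (Fin n) := by simpa using hab
  obtain ⟨label, hlabel⟩ := P.exists_label_eq_iff_part_eq hcard
  exact ⟨_, _, fun Q => compatible_iff_le_of_label P Q label hlabel⟩

theorem TP_single_apply (k : Type*) [CommRing k] {n a b : ℕ} (P : PartitionDiagram a b)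
    (f : Fin a → Fin n) (g : Fin b → Fin n) :
    TP k n P (Pi.single f 1) g = if Compatible P f g then 1 else 0 := by
  change (∑ f', if Compatible P f' g then Pi.single f (1 : k) f' else 0) = _
  rw [Finset.sum_eq_single f (fun f' _ hf' => by simp [hf']) (by simp)]
  simp

theorem stmt8_general (k : Type*) [CommRing k] (n a b : ℕ)
    (hab : a + b ≤ n) :
    LinearIndependent k fun P : PartitionDiagram a b => TP k n P := by
  choose f g hfg using exists_compatible_iff_le (n := n) hab
  have hφ : ∀ P Q : PartitionDiagram a b,
      TP k n Q (Pi.single (f P) 1) (g P) = if Q ≤ P then 1 else 0 := by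
    intro P Q
    rw [TP_single_apply, hfg]
  refine linearIndependent_of_unitriangular _
    (fun P => (LinearMap.proj (g P)).comp (LinearMap.applyₗ (Pi.single (f P) 1))) ?_ ?_
  · intro P Q hPQ
    by_contra hQP
    simp [hφ, hQP] at hPQ
  · intro P
    simp [hφ]

/-- if `k` is a nontrivial commutative ring and `a + b ≤ n`, the family
`(T_P)` indexed by partition diagrams of type `(a,b)` is linearly independent. -/
theorem stmt8 (k : Type*) [CommRing k] [Nontrivial k] (n a b : ℕ) (hn : 0 < n)
    (hab : a + b ≤ n) :
    LinearIndependent k fun P : PartitionDiagram a b => TP k n P :=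
  stmt8_general k n a b hab
end

section
/- Assume k is a field and a + b ≤ n. Then the k-vector space of S_n-equivariant linear maps V^{⊗a} → V^{⊗b} has dimension equal to the number of set partitions of a set with a + b elements (the Bell number B(a+b)), with basis the family (T_P) indexed by partition diagrams P of type (a,b). -/
open scoped Classical

/-- The submodule of `S_n`-equivariant `k`-linear maps `V^{⊗a} → V^{⊗b}`. -/
def equivariantMaps (k : Type*) [CommRing k] (n a b : ℕ) :
    Submodule k (((Fin a → Fin n) → k) →ₗ[k] ((Fin b → Fin n) → k)) where
  carrier := {F | ∀ (σ : Equiv.Perm (Fin n)) (x : (Fin a → Fin n) → k),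
    F (permMap k σ x) = permMap k σ (F x)}
  add_mem' := by
    intro F G hF hG σ x
    simp only [LinearMap.add_apply, hF σ x, hG σ x, map_add]
  zero_mem' := by
    intro σ x
    simp
  smul_mem' := by
    intro c F hF σ x
    simp only [LinearMap.smul_apply, hF σ x, map_smul]

/-!
An equivariant map is determined by its matrix coefficients `F(e_f)(g)`, and these are constant
on `S_n`-orbits of index pairs `(f, g)`. Two pairs lie in the same orbit iff `Sum.elim f g` has
the same kernel partition of `Fin a ⊕ Fin b`, and when `a + b ≤ n` every partition occurs as a
kernel. So reading off the coefficient at one representative pair per partition embeds the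
equivariant maps into `k^{partitions}`. The coefficient of `T_P` at the representative of `Q` is
`1` if `P` refines `Q` and `0` otherwise; this unitriangular pattern makes the `T_P` linearly
independent, and comparing dimensions they form a basis.
-/

open Finset

theorem Finpartition.parts_eq_image_part {X : Type*} [DecidableEq X] {s : Finset X}
    (P : Finpartition s) : P.parts = s.image P.part := by
  ext t
  constructor
  · intro ht
    obtain ⟨x, hx, rfl⟩ := P.part_surjOn ht
    exact mem_image_of_mem _ hx
  · rw [mem_image]
    rintro ⟨x, hx, rfl⟩
    exact P.part_mem.2 hx

theorem Finpartition.ext_part {X : Type*} [DecidableEq X] {s : Finset X} {P Q : Finpartition s}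
    (h : ∀ x, P.part x = Q.part x) : P = Q := by
  ext1
  rw [P.parts_eq_image_part, Q.parts_eq_image_part]
  exact image_congr fun x _ => h x

theorem Finpartition.part_eq_part_iff {X : Type*} [Fintype X] [DecidableEq X]
    {P : Finpartition (univ : Finset X)} {x y : X} : P.part x = P.part y ↔ y ∈ P.part x :=
  eq_comm.trans (P.mem_part_iff_part_eq_part (mem_univ y) (mem_univ x)).symm

section KerPartition

variable {X Y : Type*} [Fintype X] [DecidableEq X]

noncomputable def kerPartition (h : X → Y) : Finpartition (univ : Finset X) :=
  Finpartition.ofSetoid (Setoid.ker h)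

theorem mem_part_kerPartition {h : X → Y} {x y : X} :
    y ∈ (kerPartition h).part x ↔ h x = h y :=
  Finpartition.mem_part_ofSetoid_iff_rel

theorem kerPartition_eq_iff {h : X → Y} {P : Finpartition (univ : Finset X)} :
    kerPartition h = P ↔ ∀ x y, h x = h y ↔ P.part x = P.part y := by
  constructor
  · rintro rfl x y
    rw [Finpartition.part_eq_part_iff, mem_part_kerPartition]
  · intro H
    refine Finpartition.ext_part fun x => Finset.ext fun y => ?_
    rw [mem_part_kerPartition, H, Finpartition.part_eq_part_iff]

theorem kerPartition_eq_kerPartition_iff {Z : Type*} {h : X → Y} {h' : X → Z} :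
    kerPartition h = kerPartition h' ↔ ∀ x y, h x = h y ↔ h' x = h' y := by
  simp only [kerPartition_eq_iff, Finpartition.part_eq_part_iff, mem_part_kerPartition]

theorem kerPartition_comp_of_injective {Z : Type*} {φ : Y → Z} (hφ : Function.Injective φ)
    (h : X → Y) : kerPartition (φ ∘ h) = kerPartition h :=
  kerPartition_eq_kerPartition_iff.2 fun _ _ => hφ.eq_iff

theorem le_kerPartition_iff {P : Finpartition (univ : Finset X)} {h : X → Y} :
    P ≤ kerPartition h ↔ ∀ B ∈ P.parts, ∀ x ∈ B, ∀ y ∈ B, h x = h y := by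
  constructor
  · intro H B hB x hx y hy
    obtain ⟨C, hC, hBC⟩ := H hB
    rw [← (kerPartition h).part_eq_of_mem hC (hBC hx)] at hBC
    exact mem_part_kerPartition.1 (hBC hy)
  · intro H B hB
    obtain ⟨x, hx⟩ := P.nonempty_of_mem_parts hB
    exact ⟨_, (kerPartition h).part_mem.2 (mem_univ x),
      fun y hy => mem_part_kerPartition.2 (H B hB x hx y hy)⟩

variable [Fintype Y]

theorem exists_kerPartition_eq (P : Finpartition (univ : Finset X))
    (hXY : Fintype.card X ≤ Fintype.card Y) : ∃ h : X → Y, kerPartition h = P := by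
  have hcard : Fintype.card P.parts ≤ Fintype.card Y := by
    rw [Fintype.card_coe]
    exact P.card_parts_le_card.trans hXY
  obtain ⟨e⟩ := Function.Embedding.nonempty_of_card_le hcard
  refine ⟨fun x => e ⟨P.part x, P.part_mem.2 (mem_univ x)⟩, kerPartition_eq_iff.2 fun x y => ?_⟩
  rw [e.injective.eq_iff, Subtype.mk.injEq]

theorem exists_perm_comp_eq_of_kerPartition_eq {h h' : X → Y}
    (H : kerPartition h = kerPartition h') : ∃ σ : Equiv.Perm Y, σ ∘ h = h' := by
  have hfactor : h'.FactorsThrough h := fun x y hxy =>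
    (kerPartition_eq_kerPartition_iff.1 H x y).1 hxy
  -- `h' = u ∘ h` for the map `u` induced on the range of `h`; extend `u` to a permutation.
  have hinj : (Set.range h).InjOn (Function.extend h h' id) := by
    rintro _ ⟨x, rfl⟩ _ ⟨y, rfl⟩ hxy
    rw [hfactor.extend_apply, hfactor.extend_apply] at hxy
    exact (kerPartition_eq_kerPartition_iff.1 H x y).2 hxy
  obtain ⟨e, he⟩ := Set.MapsTo.exists_equiv_extend_of_card_eq (t := univ) (by simp)
    (fun _ _ => mem_univ _) hinj
  refine ⟨e.trans (Equiv.subtypeUnivEquiv mem_univ), funext fun x => ?_⟩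
  simp [he (h x) ⟨x, rfl⟩, hfactor.extend_apply]

end KerPartition

section Transport

variable {X Y : Type*}

def Equiv.finsetOrderIso (e : X ≃ Y) : Finset X ≃o Finset Y where
  toEquiv := e.finsetCongr
  map_rel_iff' := map_subset_map

@[simp]
theorem Equiv.finsetOrderIso_apply (e : X ≃ Y) (s : Finset X) :
    e.finsetOrderIso s = s.map e.toEmbedding :=
  rfl

variable [DecidableEq X] [DecidableEq Y] [Fintype X] [Fintype Y]

def Finpartition.mapUniv (e : X ≃ Y) (P : Finpartition (univ : Finset X)) :
    Finpartition (univ : Finset Y) :=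
  (P.map e.finsetOrderIso).copy ((e.finsetOrderIso_apply univ).trans (map_univ_equiv e))

theorem Finpartition.mapUniv_symm_mapUniv (e : X ≃ Y) (P : Finpartition (univ : Finset X)) :
    (P.mapUniv e).mapUniv e.symm = P := by
  ext1
  rw [mapUniv, copy_parts, parts_map, mapUniv, copy_parts, parts_map, Finset.map_map]
  convert Finset.map_refl (s := P.parts)
  ext s x
  simp

def Finpartition.univCongr (e : X ≃ Y) :
    Finpartition (univ : Finset X) ≃ Finpartition (univ : Finset Y) where
  toFun := mapUniv e
  invFun := mapUniv e.symm
  left_inv := mapUniv_symm_mapUniv e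
  right_inv Q := by simpa using mapUniv_symm_mapUniv e.symm Q

end Transport

theorem linearIndependent_indicator_Ici {ι k : Type*} [Fintype ι] [PartialOrder ι] [Ring k] :
    LinearIndependent k fun i : ι => (Set.Ici i).indicator (1 : ι → k) := by
  rw [Fintype.linearIndependent_iff]
  intro c hc j
  induction j using WellFoundedLT.induction with
  | _ j ih =>
    have hj : ∑ i, (if i ≤ j then c i else 0) = 0 := by
      simpa [Set.indicator_apply] using congrFun hc j
    rwa [Finset.sum_eq_single j (fun i _ hij => ?_) (by simp), if_pos le_rfl] at hj
    split_ifs with hle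
    exacts [ih i (lt_of_le_of_ne hle hij), rfl]

section EquivariantMaps

variable {k : Type*} [CommRing k] {n a b : ℕ}

theorem permMap_apply (σ : Equiv.Perm (Fin n)) (x : (Fin a → Fin n) → k) (f : Fin a → Fin n) :
    permMap k σ x f = x (⇑σ⁻¹ ∘ f) :=
  rfl

theorem permMap_single (σ : Equiv.Perm (Fin n)) (f : Fin a → Fin n) (c : k) :
    permMap k σ (Pi.single f c) = Pi.single (σ ∘ f) c := by
  ext f'
  rw [permMap_apply, Pi.single_apply, Pi.single_apply, Equiv.Perm.inv_def]
  exact if_congr (Equiv.symm_comp_eq σ f f') rfl rfl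

variable (k n) in
/-- `h` encodes the pair of basis indices `(h ∘ inl, h ∘ inr)` of `V^{⊗a}` and `V^{⊗b}`. -/
def matrixEntry (h : Fin a ⊕ Fin b → Fin n) :
    (((Fin a → Fin n) → k) →ₗ[k] ((Fin b → Fin n) → k)) →ₗ[k] k :=
  (LinearMap.proj (h ∘ Sum.inr)).comp (LinearMap.applyₗ (Pi.single (h ∘ Sum.inl) 1))

theorem matrixEntry_apply (h : Fin a ⊕ Fin b → Fin n)
    (F : ((Fin a → Fin n) → k) →ₗ[k] ((Fin b → Fin n) → k)) :
    matrixEntry k n h F = F (Pi.single (h ∘ Sum.inl) 1) (h ∘ Sum.inr) :=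
  rfl

theorem matrixEntry_sumElim (f : Fin a → Fin n) (g : Fin b → Fin n)
    (F : ((Fin a → Fin n) → k) →ₗ[k] ((Fin b → Fin n) → k)) :
    matrixEntry k n (Sum.elim f g) F = F (Pi.single f 1) g :=
  rfl

theorem eq_zero_of_forall_matrixEntry_eq_zero
    {F : ((Fin a → Fin n) → k) →ₗ[k] ((Fin b → Fin n) → k)}
    (H : ∀ h, matrixEntry k n h F = 0) : F = 0 :=
  LinearMap.pi_ext' fun f => LinearMap.ext_ring (funext fun g => H (Sum.elim f g))

theorem mem_equivariantMaps_iff {F : ((Fin a → Fin n) → k) →ₗ[k] ((Fin b → Fin n) → k)} :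
    F ∈ equivariantMaps k n a b ↔
      ∀ (σ : Equiv.Perm (Fin n)) h, matrixEntry k n (σ ∘ h) F = matrixEntry k n h F := by
  constructor
  · intro hF σ h
    have := congrFun (hF σ (Pi.single (h ∘ Sum.inl) 1)) (σ ∘ h ∘ Sum.inr)
    rw [permMap_single, permMap_apply] at this
    simpa [matrixEntry_apply, Function.comp_def] using this
  · intro H σ x
    suffices F ∘ₗ permMap k σ = permMap k σ ∘ₗ F from LinearMap.congr_fun this x
    refine LinearMap.pi_ext' fun f => LinearMap.ext_ring (funext fun g => ?_)
    have := H σ (Sum.elim f (⇑σ⁻¹ ∘ g))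
    simpa [matrixEntry_apply, permMap_single, permMap_apply, Function.comp_def] using this

theorem matrixEntry_eq_of_kerPartition_eq {F : ((Fin a → Fin n) → k) →ₗ[k] ((Fin b → Fin n) → k)}
    (hF : F ∈ equivariantMaps k n a b) {h h' : Fin a ⊕ Fin b → Fin n}
    (H : kerPartition h = kerPartition h') : matrixEntry k n h F = matrixEntry k n h' F := by
  obtain ⟨σ, rfl⟩ := exists_perm_comp_eq_of_kerPartition_eq H
  exact (mem_equivariantMaps_iff.1 hF σ h).symm

theorem compatible_iff_le_kerPartition (P : PartitionDiagram a b) (f : Fin a → Fin n)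
    (g : Fin b → Fin n) : Compatible P f g ↔ P ≤ kerPartition (Sum.elim f g) :=
  le_kerPartition_iff.symm

variable (k) in
theorem matrixEntry_TP (P : PartitionDiagram a b) (h : Fin a ⊕ Fin b → Fin n) :
    matrixEntry k n h (TP k n P) = if P ≤ kerPartition h then 1 else 0 := by
  rw [← Sum.elim_comp_inl_inr h, matrixEntry_sumElim, ← compatible_iff_le_kerPartition]
  simp only [TP, LinearMap.coe_mk, AddHom.coe_mk, Pi.single_apply]
  rw [Fintype.sum_eq_single (h ∘ Sum.inl) fun f hf => by simp [hf]]
  simp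

variable (k n) in
theorem TP_mem_equivariantMaps (P : PartitionDiagram a b) : TP k n P ∈ equivariantMaps k n a b :=
  mem_equivariantMaps_iff.2 fun σ h => by
    rw [matrixEntry_TP, matrixEntry_TP, kerPartition_comp_of_injective σ.injective]

variable (k) in
/-- Used with `kerPartition (rep P) = P`: then `rep P` represents the `S_n`-orbit of index pairs
with kernel `P`. -/
noncomputable def orbitCoeffs (rep : PartitionDiagram a b → (Fin a ⊕ Fin b → Fin n)) :
    equivariantMaps k n a b →ₗ[k] (PartitionDiagram a b → k) :=
  LinearMap.pi fun P => (matrixEntry k n (rep P)).comp (equivariantMaps k n a b).subtype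

variable {rep : PartitionDiagram a b → (Fin a ⊕ Fin b → Fin n)}

variable (k) in
theorem orbitCoeffs_injective (hrep : ∀ P, kerPartition (rep P) = P) :
    Function.Injective (orbitCoeffs k rep) := by
  refine (injective_iff_map_eq_zero _).2 ?_
  rintro ⟨F, hF⟩ hF0
  refine Subtype.ext (eq_zero_of_forall_matrixEntry_eq_zero fun h => ?_)
  rw [matrixEntry_eq_of_kerPartition_eq hF (hrep (kerPartition h)).symm]
  exact congrFun hF0 (kerPartition h)

variable (k) in
theorem orbitCoeffs_TP (hrep : ∀ P, kerPartition (rep P) = P) (P : PartitionDiagram a b) :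
    orbitCoeffs k rep ⟨TP k n P, TP_mem_equivariantMaps k n P⟩ = (Set.Ici P).indicator 1 := by
  ext Q
  simp [orbitCoeffs, matrixEntry_TP, hrep, Set.indicator_apply]

variable (k) in
theorem linearIndependent_TP (hab : a + b ≤ n) :
    LinearIndependent k fun P : PartitionDiagram a b =>
      (⟨TP k n P, TP_mem_equivariantMaps k n P⟩ : equivariantMaps k n a b) := by
  choose rep hrep using fun P : PartitionDiagram a b =>
    exists_kerPartition_eq (Y := Fin n) P (by simpa using hab)
  refine LinearIndependent.of_comp (orbitCoeffs k rep) ?_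
  simpa [Function.comp_def, orbitCoeffs_TP k hrep] using linearIndependent_indicator_Ici

end EquivariantMaps

theorem finrank_equivariantMaps (k : Type*) [Field k] {n a b : ℕ} (hab : a + b ≤ n) :
    Module.finrank k (equivariantMaps k n a b) = Fintype.card (PartitionDiagram a b) := by
  choose rep hrep using fun P : PartitionDiagram a b =>
    exists_kerPartition_eq (Y := Fin n) P (by simpa using hab)
  refine le_antisymm ?_ (linearIndependent_TP k hab).fintype_card_le_finrank
  simpa using LinearMap.finrank_le_finrank_of_injective (orbitCoeffs_injective k hrep)

theorem stmt10_general (k : Type*) [Field k] (n a b : ℕ) (hab : a + b ≤ n) :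
    (∃ bas : Module.Basis (PartitionDiagram a b) k (equivariantMaps k n a b),
      ∀ P : PartitionDiagram a b,
        (bas P : ((Fin a → Fin n) → k) →ₗ[k] ((Fin b → Fin n) → k)) = TP k n P) ∧
    Module.finrank k (equivariantMaps k n a b) =
      Nat.card (Finpartition (Finset.univ : Finset (Fin (a + b)))) := by
  have hdim := finrank_equivariantMaps k hab
  refine ⟨⟨basisOfLinearIndependentOfCardEqFinrank' (V := equivariantMaps k n a b) _
    (linearIndependent_TP k hab) hdim.symm, fun P => by simp⟩, ?_⟩
  rw [hdim, ← Nat.card_eq_fintype_card]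
  exact Nat.card_congr (Finpartition.univCongr finSumFinEquiv)

/-- if `k` is a field and `a + b ≤ n`, the space of `S_n`-equivariant
linear maps `V^{⊗a} → V^{⊗b}` has basis `(T_P)` indexed by the partition diagrams of
type `(a,b)`, and its dimension is the number of set partitions of a set with `a + b`
elements (the Bell number `B(a+b)`). -/
theorem stmt10 (k : Type*) [Field k] (n a b : ℕ) (hn : 0 < n) (hab : a + b ≤ n) :
    (∃ bas : Module.Basis (PartitionDiagram a b) k (equivariantMaps k n a b),
      ∀ P : PartitionDiagram a b,
        (bas P : ((Fin a → Fin n) → k) →ₗ[k] ((Fin b → Fin n) → k)) = TP k n P) ∧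
    Module.finrank k (equivariantMaps k n a b) =
      Nat.card (Finpartition (Finset.univ : Finset (Fin (a + b)))) :=
  stmt10_general k n a b hab
end
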